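/- arXiv:1711.05384 — 2 statements merged into one kernel-verified Lean document; each statement's English description precedes it below -/
import Mathlib

section
/- Stein-type estimate at an optimizing measure: let Θ be a set of probability measures on ℝ, N[φ] = sup_{μ∈Θ}∫φdμ, with N[x] = N[−x] = 0 and N[|x|^{2+α}] < ∞ for some α ∈ (0,1). Define G(a) = (1/2)N[a x²]. If φ ∈ C²_b(ℝ) with [φ'']_α < ∞ and μ ∈ Θ attains the supremum, i.e. ∫φ dμ = N[φ], then |∫ ((x/2)φ'(x) − G(φ''(x))) dμ(x)| ≤ 2[φ'']_α · N[|x|^{2+α}]. -/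
open MeasureTheory

/-- The supremum sublinear expectation `N[φ] = sup_{μ∈Θ} ∫ φ dμ`. -/
noncomputable def slExp (Θ : Set (Measure ℝ)) (φ : ℝ → ℝ) : ℝ :=
  sSup ((fun μ => ∫ x, φ x ∂μ) '' Θ)

open Set

/-!
Expand `φ` to second order at `0` and put `c = φ''(0)`. The integrand splits as
`x/2 (φ'(x) - φ'(0) - c x) + φ'(0) x/2 + (c x² - N[c y²])/2 - (N[φ''(x) y²] - N[c y²])/2`.
The linear term integrates to `0` because every measure in `Θ` is centred. The Hölder bound on `φ''`
makes the first term `O(|x|^{2+α})`, and the last one `O(|x|^α)` because `a ↦ N[a y²]` is Lipschitz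
with constant `sup_ν ∫ y² dν ≤ N[|x|^{2+α}]^{2/(2+α)}`; Lyapunov's inequality
`∫ |x|^α dμ ≤ N[|x|^{2+α}]^{α/(2+α)}` then makes the exponents add up to one.
Optimality of `μ` controls the quadratic term: for every `ν ∈ Θ`, `∫ φ dν` equals
`φ(0) + (c/2) ∫ y² dν` up to `K/2 · N[|x|^{2+α}]`, so `μ` maximises `c ∫ y² dν` over `Θ` up to
`2K · N[|x|^{2+α}]`, and `c ∫ y² dμ` is that close to `N[c y²]`.
-/

lemma abs_rpow_le_one_add_abs_rpow {p q : ℝ} (x : ℝ) (hp : 0 ≤ p) (hpq : p ≤ q) :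
    |x| ^ p ≤ 1 + |x| ^ q := by
  rcases le_total |x| 1 with h | h
  · linarith [Real.rpow_le_one (abs_nonneg x) h hp, Real.rpow_nonneg (abs_nonneg x) q]
  · linarith [Real.rpow_le_rpow_of_exponent_le h hpq]

lemma abs_le_of_abs_deriv_le_mul_abs_rpow {h h' : ℝ → ℝ} {C p : ℝ} (hp : 0 ≤ p)
    (hder : ∀ t, HasDerivAt h (h' t) t) (h0 : h 0 = 0) (hb : ∀ t, |h' t| ≤ C * |t| ^ p)
    (x : ℝ) : |h x| ≤ C / (p + 1) * |x| ^ (p + 1) := by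
  have hp1 : p + 1 ≠ 0 := by positivity
  have hu : ∀ s, HasDerivAt (fun s => h (s * x)) (h' (s * x) * x) s := fun s =>
    (hder (s * x)).comp s ((hasDerivAt_id s).mul_const x |>.congr_deriv (one_mul x))
  have hB : ∀ s : ℝ, HasDerivAt (fun s => C / (p + 1) * |x| ^ (p + 1) * s ^ (p + 1))
      (C * |x| ^ (p + 1) * s ^ p) s := fun s => by
    refine ((Real.hasDerivAt_rpow_const (Or.inr (by linarith : 1 ≤ p + 1))).const_mul
      (C / (p + 1) * |x| ^ (p + 1))).congr_deriv ?_
    rw [add_sub_cancel_right]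
    field_simp
  have hbound : ∀ s ∈ Ico (0 : ℝ) 1, ‖h' (s * x) * x‖ ≤ C * |x| ^ (p + 1) * s ^ p := by
    rintro s ⟨hs, -⟩
    rw [Real.norm_eq_abs, abs_mul, Real.rpow_add_one' (abs_nonneg x) hp1]
    calc |h' (s * x)| * |x| ≤ C * |s * x| ^ p * |x| := by gcongr; exact hb _
      _ = C * (|x| ^ p * |x|) * s ^ p := by
        rw [abs_mul, abs_of_nonneg hs, Real.mul_rpow hs (abs_nonneg x)]; ring
  have := image_norm_le_of_norm_deriv_right_le_deriv_boundary
    (fun s _ => (hu s).continuousAt.continuousWithinAt) (fun s _ => (hu s).hasDerivWithinAt)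
    (by simp [h0, Real.zero_rpow hp1]) hB hbound (right_mem_Icc.2 zero_le_one)
  simpa using this

section HolderTaylor

variable {φ : ℝ → ℝ} {K α : ℝ}

lemma abs_deriv_sub_taylor_le (hα : 0 ≤ α) (hd2 : Differentiable ℝ (deriv φ))
    (hH : ∀ x y, |deriv (deriv φ) x - deriv (deriv φ) y| ≤ K * |x - y| ^ α) (x : ℝ) :
    |deriv φ x - deriv φ 0 - deriv (deriv φ) 0 * x| ≤ K / (α + 1) * |x| ^ (α + 1) :=
  abs_le_of_abs_deriv_le_mul_abs_rpow hα
    (fun t => (((hd2 t).hasDerivAt.sub_const _).sub ((hasDerivAt_id t).const_mul _)).congr_deriv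
      (by rw [mul_one]))
    (by simp) (fun t => by simpa using hH t 0) x

lemma abs_sub_taylor_le (hα : 0 ≤ α) (hd1 : Differentiable ℝ φ)
    (hd2 : Differentiable ℝ (deriv φ))
    (hH : ∀ x y, |deriv (deriv φ) x - deriv (deriv φ) y| ≤ K * |x - y| ^ α) (x : ℝ) :
    |φ x - φ 0 - deriv φ 0 * x - deriv (deriv φ) 0 / 2 * x ^ 2| ≤
      K / ((α + 1) * (2 + α)) * |x| ^ (2 + α) := by
  have hder : ∀ t, HasDerivAt (fun t => φ t - φ 0 - deriv φ 0 * t - deriv (deriv φ) 0 / 2 * t ^ 2)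
      (deriv φ t - deriv φ 0 - deriv (deriv φ) 0 * t) t := fun t =>
    ((((hd1 t).hasDerivAt.sub_const _).sub ((hasDerivAt_id t).const_mul _)).sub
      ((hasDerivAt_pow 2 t).const_mul _)).congr_deriv (by simp; ring)
  have := abs_le_of_abs_deriv_le_mul_abs_rpow (by positivity) hder (by simp)
    (abs_deriv_sub_taylor_le hα hd2 hH) x
  rwa [div_div, show α + 1 + 1 = 2 + α by ring] at this

lemma abs_mul_deriv_sub_taylor_le (hα : 0 ≤ α) (hd2 : Differentiable ℝ (deriv φ))
    (hH : ∀ x y, |deriv (deriv φ) x - deriv (deriv φ) y| ≤ K * |x - y| ^ α) (x : ℝ) :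
    |x / 2 * (deriv φ x - deriv φ 0 - deriv (deriv φ) 0 * x)| ≤
      K / (2 * (α + 1)) * |x| ^ (2 + α) := by
  rw [abs_mul, abs_div, abs_two, show 2 + α = α + 1 + 1 by ring,
    Real.rpow_add_one' (abs_nonneg x) (by positivity)]
  calc |x| / 2 * |deriv φ x - deriv φ 0 - deriv (deriv φ) 0 * x|
      ≤ |x| / 2 * (K / (α + 1) * |x| ^ (α + 1)) := by
        gcongr; exact abs_deriv_sub_taylor_le hα hd2 hH x
    _ = K / (2 * (α + 1)) * (|x| ^ (α + 1) * |x|) := by field_simp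

lemma abs_comp_deriv_deriv_sub_le {G : ℝ → ℝ} {S : NNReal} (hG : LipschitzWith S G)
    (hH : ∀ x y, |deriv (deriv φ) x - deriv (deriv φ) y| ≤ K * |x - y| ^ α) (x : ℝ) :
    |G (deriv (deriv φ) x) - G (deriv (deriv φ) 0)| ≤ S * K * |x| ^ α :=
  calc |G (deriv (deriv φ) x) - G (deriv (deriv φ) 0)|
      ≤ S * |deriv (deriv φ) x - deriv (deriv φ) 0| := by
        simpa only [Real.dist_eq] using hG.dist_le_mul _ _
    _ ≤ S * (K * |x| ^ α) := by gcongr; simpa using hH x 0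
    _ = S * K * |x| ^ α := by ring

end HolderTaylor

section Moments

lemma integral_rpow_le_rpow_integral {Ω : Type*} [MeasurableSpace Ω] {ν : Measure Ω}
    [IsProbabilityMeasure ν] {g : Ω → ℝ} (hg0 : ∀ ω, 0 ≤ g ω) (hg : Integrable g ν) {s : ℝ}
    (hs0 : 0 ≤ s) (hs1 : s ≤ 1) : ∫ ω, g ω ^ s ∂ν ≤ (∫ ω, g ω ∂ν) ^ s := by
  have hgs : Integrable (fun ω => g ω ^ s) ν := by
    refine ((integrable_const 1).add hg).mono'
      (hg.aestronglyMeasurable.aemeasurable.pow_const s).aestronglyMeasurable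
      (ae_of_all _ fun ω => ?_)
    have := abs_rpow_le_one_add_abs_rpow (g ω) hs0 hs1
    rwa [Real.rpow_one, abs_of_nonneg (hg0 ω), ← abs_of_nonneg (Real.rpow_nonneg (hg0 ω) s)]
      at this
  exact (Real.concaveOn_rpow hs0 hs1).le_map_integral
    (Real.continuous_rpow_const hs0).continuousOn isClosed_Ici (ae_of_all _ hg0) hg hgs

lemma abs_integral_le_mul_integral_of_abs_le {Ω : Type*} [MeasurableSpace Ω] {ν : Measure Ω}
    {f g : Ω → ℝ} {c : ℝ} (hg : Integrable g ν) (h : ∀ ω, |f ω| ≤ c * g ω) :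
    |∫ ω, f ω ∂ν| ≤ c * ∫ ω, g ω ∂ν := by
  rw [← integral_const_mul, ← Real.norm_eq_abs]
  exact norm_integral_le_of_norm_le (hg.const_mul c) (ae_of_all _ h)

variable {ν : Measure ℝ} {p q : ℝ}

lemma integrable_abs_rpow_of_le [IsFiniteMeasure ν] (hq : Integrable (fun x => |x| ^ q) ν)
    (hp : 0 ≤ p) (hpq : p ≤ q) : Integrable (fun x => |x| ^ p) ν :=
  ((integrable_const 1).add hq).mono' (by fun_prop)
    (ae_of_all _ fun x => by
      rw [Real.norm_eq_abs, abs_of_nonneg (by positivity)]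
      exact abs_rpow_le_one_add_abs_rpow x hp hpq)

lemma integral_abs_rpow_le_rpow_of_le [IsProbabilityMeasure ν]
    (hq : Integrable (fun x => |x| ^ q) ν) (hp : 0 ≤ p) (hpq : p ≤ q) (hq0 : 0 < q) {M : ℝ}
    (hM : ∫ x, |x| ^ q ∂ν ≤ M) : ∫ x, |x| ^ p ∂ν ≤ M ^ (p / q) := by
  have hpow : ∀ x : ℝ, (|x| ^ q) ^ (p / q) = |x| ^ p := fun x => by
    rw [← Real.rpow_mul (abs_nonneg x), mul_div_cancel₀ p hq0.ne']
  have hjensen := integral_rpow_le_rpow_integral (fun x => by positivity) hq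
    (div_nonneg hp hq0.le) (div_le_one_of_le₀ hpq hq0.le)
  simp only [hpow] at hjensen
  exact hjensen.trans <|
    Real.rpow_le_rpow (integral_nonneg fun x => by positivity) hM (div_nonneg hp hq0.le)

lemma integrable_id_of_integrable_abs_rpow [IsFiniteMeasure ν]
    (hq : Integrable (fun x => |x| ^ q) ν) (hq1 : 1 ≤ q) : Integrable (fun x => x) ν :=
  (integrable_abs_rpow_of_le hq zero_le_one hq1).mono' (by fun_prop)
    (ae_of_all _ fun x => by simp)

lemma integrable_sq_of_integrable_abs_rpow [IsFiniteMeasure ν]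
    (hq : Integrable (fun x => |x| ^ q) ν) (hq2 : 2 ≤ q) : Integrable (fun x => x ^ 2) ν :=
  (integrable_abs_rpow_of_le hq zero_le_two hq2).mono' (by fun_prop)
    (ae_of_all _ fun x => by simp)

end Moments

section SublinearExpectation

variable {Θ : Set (Measure ℝ)} {μ ν : Measure ℝ} {φ : ℝ → ℝ} {B : ℝ}

lemma integral_le_slExp (hbdd : BddAbove ((fun μ => ∫ x, φ x ∂μ) '' Θ)) (hν : ν ∈ Θ) :
    ∫ x, φ x ∂ν ≤ slExp Θ φ :=
  le_csSup hbdd (mem_image_of_mem _ hν)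

lemma slExp_le (hne : Θ.Nonempty) (h : ∀ ν ∈ Θ, ∫ x, φ x ∂ν ≤ B) : slExp Θ φ ≤ B :=
  csSup_le (hne.image _) (forall_mem_image.2 h)

lemma bddAbove_integral_of_abs_le (h : ∀ ν ∈ Θ, |∫ x, φ x ∂ν| ≤ B) :
    BddAbove ((fun μ => ∫ x, φ x ∂μ) '' Θ) :=
  ⟨B, forall_mem_image.2 fun ν hν => (le_abs_self _).trans (h ν hν)⟩

lemma integral_id_eq_zero_of_slExp (h : ∀ ν ∈ Θ, ∫ x, |x| ∂ν ≤ B)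
    (hmean : slExp Θ (fun x => x) = 0) (hmean' : slExp Θ (fun x => -x) = 0) (hν : ν ∈ Θ) :
    ∫ x, x ∂ν = 0 := by
  have habs : ∀ ν ∈ Θ, |∫ x, x ∂ν| ≤ B := fun ν hν =>
    (norm_integral_le_integral_norm (fun x : ℝ => x)).trans (h ν hν)
  have h' : ∀ ν ∈ Θ, |∫ x, -x ∂ν| ≤ B := fun ν hν => by
    rw [integral_neg, abs_neg]; exact habs ν hν
  have hle := integral_le_slExp (bddAbove_integral_of_abs_le habs) hν
  have hge := integral_le_slExp (bddAbove_integral_of_abs_le h') hν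
  rw [integral_neg] at hge
  linarith

variable {S : ℝ}

lemma integral_mul_sq_le_slExp (hS : ∀ ν ∈ Θ, ∫ y, y ^ 2 ∂ν ≤ S) (a : ℝ) (hν : ν ∈ Θ) :
    a * ∫ y, y ^ 2 ∂ν ≤ slExp Θ (fun y => a * y ^ 2) := by
  rw [← integral_const_mul]
  refine integral_le_slExp (bddAbove_integral_of_abs_le (B := |a| * S) fun ν hν => ?_) hν
  rw [integral_const_mul, abs_mul, abs_of_nonneg (integral_nonneg fun y => sq_nonneg y)]
  exact mul_le_mul_of_nonneg_left (hS ν hν) (abs_nonneg a)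

lemma slExp_mul_sq_le (hne : Θ.Nonempty) {a : ℝ} (h : ∀ ν ∈ Θ, a * ∫ y, y ^ 2 ∂ν ≤ B) :
    slExp Θ (fun y => a * y ^ 2) ≤ B :=
  slExp_le hne fun ν hν => by rw [integral_const_mul]; exact h ν hν

lemma slExp_mul_sq_le_add (hne : Θ.Nonempty) (hS : ∀ ν ∈ Θ, ∫ y, y ^ 2 ∂ν ≤ S) (a b : ℝ) :
    slExp Θ (fun y => a * y ^ 2) ≤ slExp Θ (fun y => b * y ^ 2) + S * |a - b| :=
  slExp_mul_sq_le hne fun ν hν => by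
    have hm0 : 0 ≤ ∫ y, y ^ 2 ∂ν := integral_nonneg fun y => sq_nonneg y
    have hab : (a - b) * ∫ y, y ^ 2 ∂ν ≤ |a - b| * S :=
      (mul_le_mul_of_nonneg_right (le_abs_self _) hm0).trans
        (mul_le_mul_of_nonneg_left (hS ν hν) (abs_nonneg _))
    linarith [integral_mul_sq_le_slExp hS b hν]

lemma lipschitzWith_slExp_mul_sq (hne : Θ.Nonempty) (hS : ∀ ν ∈ Θ, ∫ y, y ^ 2 ∂ν ≤ S) :
    LipschitzWith S.toNNReal fun a => slExp Θ (fun y => a * y ^ 2) := by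
  refine LipschitzWith.of_dist_le' fun a b => ?_
  rw [Real.dist_eq, Real.dist_eq, abs_sub_le_iff]
  constructor
  · linarith [slExp_mul_sq_le_add hne hS a b]
  · have := slExp_mul_sq_le_add hne hS b a
    rw [abs_sub_comm] at this
    linarith

lemma abs_mul_integral_sq_sub_slExp_le (hμ : μ ∈ Θ) (hS : ∀ ν ∈ Θ, ∫ y, y ^ 2 ∂ν ≤ S)
    {a c E : ℝ} (happrox : ∀ ν ∈ Θ, |∫ x, φ x ∂ν - (a + c / 2 * ∫ y, y ^ 2 ∂ν)| ≤ E)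
    (hopt : ∫ x, φ x ∂μ = slExp Θ φ) :
    |c * ∫ y, y ^ 2 ∂μ - slExp Θ (fun y => c * y ^ 2)| ≤ 4 * E := by
  have hbdd : BddAbove ((fun μ => ∫ x, φ x ∂μ) '' Θ) := by
    refine ⟨a + |c| / 2 * S + E, forall_mem_image.2 fun ν hν => ?_⟩
    have hm : c / 2 * ∫ y, y ^ 2 ∂ν ≤ |c| / 2 * S := by
      have hm0 : 0 ≤ ∫ y, y ^ 2 ∂ν := integral_nonneg fun y => sq_nonneg y
      calc c / 2 * ∫ y, y ^ 2 ∂ν ≤ |c| / 2 * ∫ y, y ^ 2 ∂ν := by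
            gcongr; exact le_abs_self c
        _ ≤ |c| / 2 * S := by gcongr; exact hS ν hν
    linarith [(abs_le.1 (happrox ν hν)).2]
  have hle : slExp Θ (fun y => c * y ^ 2) ≤ c * ∫ y, y ^ 2 ∂μ + 4 * E :=
    slExp_mul_sq_le ⟨μ, hμ⟩ fun ν hν => by
      have hopt_ν : ∫ x, φ x ∂ν ≤ ∫ x, φ x ∂μ := hopt ▸ integral_le_slExp hbdd hν
      linarith [abs_le.1 (happrox ν hν), abs_le.1 (happrox μ hμ)]
  have hge := integral_mul_sq_le_slExp hS c hμ
  have hE : 0 ≤ E := (abs_nonneg _).trans (happrox μ hμ)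
  rw [abs_sub_le_iff]
  constructor <;> linarith

end SublinearExpectation

section Integrals

variable {ν : Measure ℝ} {φ : ℝ → ℝ} {K α : ℝ}

lemma abs_integral_sub_taylor_le [IsProbabilityMeasure ν] (hα : 0 ≤ α)
    (hd1 : Differentiable ℝ φ) (hd2 : Differentiable ℝ (deriv φ))
    (hH : ∀ x y, |deriv (deriv φ) x - deriv (deriv φ) y| ≤ K * |x - y| ^ α)
    (hmean : ∫ x, x ∂ν = 0) (hq : Integrable (fun x => |x| ^ (2 + α)) ν) :
    |∫ x, φ x ∂ν - (φ 0 + deriv (deriv φ) 0 / 2 * ∫ x, x ^ 2 ∂ν)| ≤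
      K / ((α + 1) * (2 + α)) * ∫ x, |x| ^ (2 + α) ∂ν := by
  set d := deriv φ 0
  set c := deriv (deriv φ) 0
  have hR : Integrable (fun x => φ x - φ 0 - d * x - c / 2 * x ^ 2) ν :=
    (hq.const_mul _).mono' (by have := hd1.continuous; fun_prop)
      (ae_of_all _ (abs_sub_taylor_le hα hd1 hd2 hH))
  have hx : Integrable (fun x => d * x) ν :=
    (integrable_id_of_integrable_abs_rpow hq (by linarith)).const_mul d
  have hx2 : Integrable (fun x => c / 2 * x ^ 2) ν :=
    (integrable_sq_of_integrable_abs_rpow hq (by linarith)).const_mul _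
  have hsplit : ∫ x, φ x ∂ν - (φ 0 + c / 2 * ∫ x, x ^ 2 ∂ν) =
      ∫ x, (φ x - φ 0 - d * x - c / 2 * x ^ 2) ∂ν := by
    have hφ : ∫ x, φ x ∂ν = ∫ x, ((φ x - φ 0 - d * x - c / 2 * x ^ 2) +
        (d * x + c / 2 * x ^ 2) + φ 0) ∂ν := by
      congr 1; ext x; ring
    rw [hφ, integral_add (hR.fun_add (hx.fun_add hx2)) (integrable_const _),
      integral_add hR (hx.fun_add hx2), integral_add hx hx2, integral_const_mul,
      integral_const_mul, hmean, integral_const, probReal_univ, one_smul]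
    ring
  rw [hsplit]
  exact abs_integral_le_mul_integral_of_abs_le hq (abs_sub_taylor_le hα hd1 hd2 hH)

lemma integral_stein_decomposition [IsProbabilityMeasure ν] {f g G : ℝ → ℝ} {d c : ℝ}
    (hmean : ∫ x, x ∂ν = 0) (hx : Integrable (fun x => x) ν)
    (hx2 : Integrable (fun x => x ^ 2) ν)
    (ha : Integrable (fun x => x / 2 * (f x - d - c * x)) ν)
    (hb : Integrable (fun x => G (g x) - G c) ν) :
    ∫ x, (x / 2 * f x - 1 / 2 * G (g x)) ∂ν =
      ∫ x, x / 2 * (f x - d - c * x) ∂ν + (c * ∫ x, x ^ 2 ∂ν - G c) / 2 -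
        (∫ x, (G (g x) - G c) ∂ν) / 2 := by
  have hsplit : (fun x => x / 2 * f x - 1 / 2 * G (g x)) = fun x =>
      x / 2 * (f x - d - c * x) + (d / 2 * x + c / 2 * x ^ 2) -
        (1 / 2 * (G (g x) - G c) + G c / 2) := by
    ext x; ring
  rw [hsplit, integral_sub (ha.fun_add ((hx.const_mul _).fun_add (hx2.const_mul _)))
      ((hb.const_mul _).fun_add (integrable_const _)),
    integral_add ha ((hx.const_mul _).fun_add (hx2.const_mul _)),
    integral_add (hx.const_mul _) (hx2.const_mul _),
    integral_add (hb.const_mul _) (integrable_const _),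
    integral_const_mul, integral_const_mul, integral_const_mul, hmean]
  simp only [integral_const, probReal_univ, smul_eq_mul]
  ring

lemma abs_integral_stein_le [IsProbabilityMeasure ν] {G : ℝ → ℝ} {M : ℝ} (hα : 0 ≤ α)
    (hK : 0 ≤ K) (hd2 : Differentiable ℝ (deriv φ))
    (hH : ∀ x y, |deriv (deriv φ) x - deriv (deriv φ) y| ≤ K * |x - y| ^ α)
    (hG : LipschitzWith (M ^ (2 / (2 + α))).toNNReal G) (hmean : ∫ x, x ∂ν = 0)
    (hq : Integrable (fun x => |x| ^ (2 + α)) ν) (hM : ∫ x, |x| ^ (2 + α) ∂ν ≤ M)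
    (hquad : |deriv (deriv φ) 0 * ∫ x, x ^ 2 ∂ν - G (deriv (deriv φ) 0)| ≤ 2 * K * M) :
    |∫ x, (x / 2 * deriv φ x - 1 / 2 * G (deriv (deriv φ) x)) ∂ν| ≤ 2 * K * M := by
  have hM0 : 0 ≤ M := (integral_nonneg fun x => by positivity).trans hM
  have ha := abs_mul_deriv_sub_taylor_le hα hd2 hH
  have hb := abs_comp_deriv_deriv_sub_le hG hH
  have hqα := integrable_abs_rpow_of_le hq hα (by linarith)
  rw [integral_stein_decomposition (f := deriv φ) (g := deriv (deriv φ)) hmean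
    (integrable_id_of_integrable_abs_rpow hq (by linarith))
    (integrable_sq_of_integrable_abs_rpow hq (by linarith))
    ((hq.const_mul _).mono' (by have := hd2.continuous; fun_prop) (ae_of_all _ ha))
    ((hqα.const_mul _).mono'
      ((hG.continuous.measurable.comp (measurable_deriv _)).sub_const _).aestronglyMeasurable
      (ae_of_all _ hb))]
  have hA := (abs_integral_le_mul_integral_of_abs_le hq ha).trans <|
    mul_le_mul (div_le_div_of_nonneg_left hK two_pos (by linarith)) hM
      (integral_nonneg fun x => by positivity) (by positivity)
  have hB : |∫ x, (G (deriv (deriv φ) x) - G (deriv (deriv φ) 0)) ∂ν| ≤ K * M := by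
    refine (abs_integral_le_mul_integral_of_abs_le hqα hb).trans ?_
    rw [Real.coe_toNNReal _ (by positivity)]
    calc M ^ (2 / (2 + α)) * K * ∫ x, |x| ^ α ∂ν
        ≤ M ^ (2 / (2 + α)) * K * M ^ (α / (2 + α)) := by
          gcongr; exact integral_abs_rpow_le_rpow_of_le hq hα (by linarith) (by positivity) hM
      _ = K * M := by
        rw [mul_right_comm, ← Real.rpow_add' hM0 (by positivity), ← add_div,
          div_self (by positivity), Real.rpow_one, mul_comm]
  rw [abs_le] at hA hB hquad ⊢
  constructor <;> linarith [hA.1, hA.2, hB.1, hB.2, hquad.1, hquad.2]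

end Integrals

theorem stein_type_estimate_general (Θ : Set (Measure ℝ))
    (hprob : ∀ μ ∈ Θ, IsProbabilityMeasure μ)
    (α K : ℝ) (hα : α ∈ Set.Ioo (0:ℝ) 1) (hK : 0 ≤ K)
    (hint : ∀ μ ∈ Θ, Integrable (fun x => |x| ^ (2 + α)) μ)
    (hbdd : BddAbove ((fun μ => ∫ x, |x| ^ (2 + α) ∂μ) '' Θ))
    (hmean : slExp Θ (fun x => x) = 0) (hmean' : slExp Θ (fun x => -x) = 0)
    (φ : ℝ → ℝ)
    (hd1 : Differentiable ℝ φ) (hd2 : Differentiable ℝ (deriv φ))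
    (hH : ∀ x y : ℝ, |deriv (deriv φ) x - deriv (deriv φ) y| ≤ K * |x - y| ^ α)
    (μ : Measure ℝ) (hμ : μ ∈ Θ) (hopt : ∫ x, φ x ∂μ = slExp Θ φ) :
    |∫ x, (x / 2 * deriv φ x -
        (1/2) * slExp Θ (fun y => deriv (deriv φ) x * y^2)) ∂μ| ≤
      2 * K * slExp Θ (fun x => |x| ^ (2 + α)) := by
  have hα0 : 0 ≤ α := hα.1.le
  set M := slExp Θ (fun x => |x| ^ (2 + α))
  have hM : ∀ ν ∈ Θ, ∫ x, |x| ^ (2 + α) ∂ν ≤ M := fun ν hν => integral_le_slExp hbdd hν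
  have hmom : ∀ p, 0 ≤ p → p ≤ 2 + α → ∀ ν ∈ Θ, ∫ x, |x| ^ p ∂ν ≤ M ^ (p / (2 + α)) :=
    fun p hp hpq ν hν => have := hprob ν hν
      integral_abs_rpow_le_rpow_of_le (hint ν hν) hp hpq (by positivity) (hM ν hν)
  have hS : ∀ ν ∈ Θ, ∫ y, y ^ 2 ∂ν ≤ M ^ (2 / (2 + α)) := fun ν hν => by
    simpa using hmom 2 zero_le_two (by linarith) ν hν
  have hmean0 : ∀ ν ∈ Θ, ∫ x, x ∂ν = 0 := fun ν hν => integral_id_eq_zero_of_slExp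
    (fun ν hν => by simpa using hmom 1 zero_le_one (by linarith) ν hν) hmean hmean' hν
  have htaylor : ∀ ν ∈ Θ, |∫ x, φ x ∂ν - (φ 0 + deriv (deriv φ) 0 / 2 * ∫ x, x ^ 2 ∂ν)| ≤
      K / 2 * M := fun ν hν => by
    have := hprob ν hν
    exact (abs_integral_sub_taylor_le hα0 hd1 hd2 hH (hmean0 ν hν) (hint ν hν)).trans <|
      mul_le_mul (div_le_div_of_nonneg_left hK two_pos (by nlinarith)) (hM ν hν)
        (integral_nonneg fun x => by positivity) (by positivity)
  have := hprob μ hμ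
  refine abs_integral_stein_le hα0 hK hd2 hH (lipschitzWith_slExp_mul_sq ⟨μ, hμ⟩ hS)
    (hmean0 μ hμ) (hint μ hμ) (hM μ hμ) ?_
  linarith [abs_mul_integral_sq_sub_slExp_le hμ hS htaylor hopt]

/-- Stein-type estimate at an optimizing measure:
`|∫ ((x/2)φ'(x) − G(φ''(x))) dμ| ≤ 2[φ'']_α N[|x|^{2+α}]` where `G(a) = (1/2)N[ax²]`. -/
theorem stein_type_estimate (Θ : Set (Measure ℝ)) (hne : Θ.Nonempty)
    (hprob : ∀ μ ∈ Θ, IsProbabilityMeasure μ)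
    (α K : ℝ) (hα : α ∈ Set.Ioo (0:ℝ) 1) (hK : 0 ≤ K)
    (hint : ∀ μ ∈ Θ, Integrable (fun x => |x| ^ (2 + α)) μ)
    (hbdd : BddAbove ((fun μ => ∫ x, |x| ^ (2 + α) ∂μ) '' Θ))
    (hmean : slExp Θ (fun x => x) = 0) (hmean' : slExp Θ (fun x => -x) = 0)
    (φ : ℝ → ℝ) (hφb : ∃ C, ∀ x, |φ x| ≤ C)
    (hd1 : Differentiable ℝ φ) (hd2 : Differentiable ℝ (deriv φ))
    (hH : ∀ x y : ℝ, |deriv (deriv φ) x - deriv (deriv φ) y| ≤ K * |x - y| ^ α)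
    (μ : Measure ℝ) (hμ : μ ∈ Θ) (hopt : ∫ x, φ x ∂μ = slExp Θ φ) :
    |∫ x, (x / 2 * deriv φ x -
        (1/2) * slExp Θ (fun y => deriv (deriv φ) x * y^2)) ∂μ| ≤
      2 * K * slExp Θ (fun x => |x| ^ (2 + α)) :=
  stein_type_estimate_general Θ hprob α K hα hK hint hbdd hmean hmean' φ hd1 hd2 hH μ hμ hopt
end

section
/- Two-sided sublinear expectation Taylor bound: with N, G, φ as in the Stein setup (N[x]=N[−x]=0, G(a)=(1/2)N[ax²]), one has |N[φ] − φ(0) − G(φ''(0))| ≤ (1/2)[φ'']_α · N[|x|^{2+α}]. -/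
/-! By Taylor's theorem with Lagrange remainder, the Hölder bound on `φ''` gives
`|φ x - φ 0 - φ' 0 * x - φ'' 0 * x² / 2| ≤ K / 2 * |x| ^ (2 + α)`. The hypotheses `N[x] = N[-x] = 0`
force every `μ ∈ Θ` to be centred, so integrating this against `μ` removes the linear term, and
the resulting bound for each `μ` passes to the suprema defining `N`. -/

open MeasureTheory

open Set

theorem continuous_of_abs_sub_le_mul_rpow {f : ℝ → ℝ} {K α : ℝ} (hα : 0 < α)
    (hf : ∀ x y, |f x - f y| ≤ K * |x - y| ^ α) : Continuous f := by
  refine continuous_iff_continuousAt.2 fun x => tendsto_iff_norm_sub_tendsto_zero.2 ?_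
  have hlim : Filter.Tendsto (fun y => K * |y - x| ^ α) (nhds x) (nhds 0) := by
    have : ContinuousAt (fun y => K * |y - x| ^ α) x := by fun_prop (disch := positivity)
    simpa [Real.zero_rpow hα.ne'] using this.tendsto
  exact squeeze_zero (fun _ => norm_nonneg _) (fun y => hf y x) hlim

theorem contDiff_two_of_continuous_deriv_deriv {φ : ℝ → ℝ} (hd1 : Differentiable ℝ φ)
    (hd2 : Differentiable ℝ (deriv φ)) (hc : Continuous (deriv (deriv φ))) :
    ContDiff ℝ 2 φ :=
  contDiff_succ_iff_deriv.2 ⟨hd1, by simp, contDiff_succ_iff_deriv.2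
    ⟨hd2, by simp, contDiff_zero.2 hc⟩⟩

theorem exists_mem_uIcc_eq_taylor_two {φ : ℝ → ℝ} (hφ : ContDiff ℝ 2 φ) (x₀ x : ℝ) :
    ∃ ξ ∈ uIcc x₀ x,
      φ x = φ x₀ + deriv φ x₀ * (x - x₀) + deriv (deriv φ) ξ * (x - x₀) ^ 2 / 2 := by
  rcases eq_or_ne x₀ x with rfl | hx
  · exact ⟨x₀, left_mem_uIcc, by simp⟩
  obtain ⟨ξ, hξ, h⟩ := taylor_mean_remainder_lagrange_iteratedDeriv (n := 1) hx hφ.contDiffOn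
  have hderiv : derivWithin φ (uIcc x₀ x) x₀ = deriv φ x₀ :=
    ((hφ.differentiable two_ne_zero) x₀).derivWithin (uniqueDiffOn_uIcc hx x₀ left_mem_uIcc)
  refine ⟨ξ, Ioo_subset_Icc_self hξ, ?_⟩
  simp only [taylorWithinEval_succ, taylor_within_zero_eval, iteratedDeriv_succ] at h
  norm_num [hderiv] at h
  linarith

theorem abs_taylor_two_remainder_le {φ : ℝ → ℝ} {K α : ℝ} (hφ : ContDiff ℝ 2 φ) (hK : 0 ≤ K)
    (hα : 0 ≤ α) (hH : ∀ x y, |deriv (deriv φ) x - deriv (deriv φ) y| ≤ K * |x - y| ^ α)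
    (x₀ x : ℝ) :
    |φ x - φ x₀ - deriv φ x₀ * (x - x₀) - 1 / 2 * deriv (deriv φ) x₀ * (x - x₀) ^ 2| ≤
      1 / 2 * K * |x - x₀| ^ (2 + α) := by
  obtain ⟨ξ, hξ, hφx⟩ := exists_mem_uIcc_eq_taylor_two hφ x₀ x
  have hrem : φ x - φ x₀ - deriv φ x₀ * (x - x₀) - 1 / 2 * deriv (deriv φ) x₀ * (x - x₀) ^ 2
      = 1 / 2 * (deriv (deriv φ) ξ - deriv (deriv φ) x₀) * (x - x₀) ^ 2 := by
    rw [hφx]; ring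
  calc _ = 1 / 2 * |deriv (deriv φ) ξ - deriv (deriv φ) x₀| * |x - x₀| ^ 2 := by
        rw [hrem, abs_mul, abs_mul, abs_pow, abs_of_pos one_half_pos]
    _ ≤ 1 / 2 * (K * |x - x₀| ^ α) * |x - x₀| ^ 2 := by
        gcongr
        exact (hH ξ x₀).trans <| mul_le_mul_of_nonneg_left
          (Real.rpow_le_rpow (abs_nonneg _) (abs_sub_left_of_mem_uIcc hξ) hα) hK
    _ = 1 / 2 * K * |x - x₀| ^ (2 + α) := by
        rw [Real.rpow_add' (abs_nonneg _) (by positivity), Real.rpow_two]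
        ring

theorem rpow_le_one_add_rpow {t p q : ℝ} (ht : 0 ≤ t) (hq : 0 ≤ q) (hqp : q ≤ p) :
    t ^ q ≤ 1 + t ^ p := by
  rcases le_total t 1 with ht1 | ht1
  · linarith [Real.rpow_le_one ht ht1 hq, Real.rpow_nonneg ht p]
  · linarith [Real.rpow_le_rpow_of_exponent_le ht1 hqp]

theorem abs_le_one_add_abs_rpow {p : ℝ} (hp : 1 ≤ p) (x : ℝ) : |x| ≤ 1 + |x| ^ p := by
  simpa using rpow_le_one_add_rpow (abs_nonneg x) zero_le_one hp

theorem sq_le_one_add_abs_rpow {p : ℝ} (hp : 2 ≤ p) (x : ℝ) : x ^ 2 ≤ 1 + |x| ^ p := by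
  simpa [Real.rpow_two] using rpow_le_one_add_rpow (abs_nonneg x) zero_le_two hp

section DominatedByMoment

variable {Ω : Type*} [MeasurableSpace Ω] {f ρ : Ω → ℝ} {C D : ℝ}

theorem integrable_of_abs_le_const_add_mul {μ : Measure Ω} [IsFiniteMeasure μ]
    (hρ : Integrable ρ μ) (hf : AEStronglyMeasurable f μ) (h : ∀ x, |f x| ≤ C + D * ρ x) :
    Integrable f μ :=
  ((integrable_const C).add (hρ.const_mul D)).mono' hf (ae_of_all _ h)

theorem bddAbove_integral_image_of_abs_le {Θ : Set (Measure Ω)}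
    (hprob : ∀ μ ∈ Θ, IsProbabilityMeasure μ) (hρ : ∀ μ ∈ Θ, Integrable ρ μ)
    (hρΘ : BddAbove ((fun μ => ∫ x, ρ x ∂μ) '' Θ)) (hD : 0 ≤ D) (hf : Measurable f)
    (h : ∀ x, |f x| ≤ C + D * ρ x) :
    BddAbove ((fun μ => ∫ x, f x ∂μ) '' Θ) := by
  obtain ⟨M, hM⟩ := hρΘ
  refine ⟨C + D * M, ?_⟩
  rintro _ ⟨μ, hμ, rfl⟩
  have := hprob μ hμ
  have hDρ := (hρ μ hμ).const_mul D
  calc ∫ x, f x ∂μ ≤ ∫ x, (C + D * ρ x) ∂μ :=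
        integral_mono (integrable_of_abs_le_const_add_mul (hρ μ hμ) hf.aestronglyMeasurable h)
          ((integrable_const C).add hDρ) fun x => (le_abs_self _).trans (h x)
    _ = C + D * ∫ x, ρ x ∂μ := by
        rw [integral_add (integrable_const C) hDρ, integral_const_mul]
        simp
    _ ≤ C + D * M := by gcongr; exact hM (mem_image_of_mem _ hμ)

end DominatedByMoment

theorem abs_csSup_image_sub_le {ι : Type*} {s : Set ι} {F G H : ι → ℝ} {c a b : ℝ}
    (hs : s.Nonempty) (hF : BddAbove (F '' s)) (hG : BddAbove (G '' s))
    (hH : BddAbove (H '' s)) (ha : 0 < a) (hb : 0 ≤ b)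
    (h : ∀ i ∈ s, |F i - c - a * G i| ≤ b * H i) :
    |sSup (F '' s) - c - a * sSup (G '' s)| ≤ b * sSup (H '' s) := by
  have le_sup {f : ι → ℝ} (hf : BddAbove (f '' s)) {i} (hi : i ∈ s) : f i ≤ sSup (f '' s) :=
    le_csSup hf (mem_image_of_mem f hi)
  have hbH {i} (hi : i ∈ s) : b * H i ≤ b * sSup (H '' s) :=
    mul_le_mul_of_nonneg_left (le_sup hH hi) hb
  have hFs : sSup (F '' s) ≤ c + a * sSup (G '' s) + b * sSup (H '' s) := by
    refine csSup_le (hs.image F) ?_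
    rintro _ ⟨i, hi, rfl⟩
    have := mul_le_mul_of_nonneg_left (le_sup hG hi) ha.le
    linarith [(abs_le.1 (h i hi)).2, hbH hi]
  have hGs : sSup (G '' s) ≤ (sSup (F '' s) - c + b * sSup (H '' s)) / a := by
    refine csSup_le (hs.image G) ?_
    rintro _ ⟨i, hi, rfl⟩
    rw [le_div_iff₀ ha]
    linarith [(abs_le.1 (h i hi)).1, hbH hi, le_sup hF hi]
  rw [le_div_iff₀ ha] at hGs
  exact abs_le.2 ⟨by linarith, by linarith⟩

theorem integral_eq_zero_of_slExp_eq_zero {Θ : Set (Measure ℝ)} {f : ℝ → ℝ}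
    (hf : BddAbove ((fun μ => ∫ x, f x ∂μ) '' Θ))
    (hf' : BddAbove ((fun μ => ∫ x, -f x ∂μ) '' Θ))
    (h : slExp Θ f = 0) (h' : slExp Θ (fun x => -f x) = 0) {μ : Measure ℝ} (hμ : μ ∈ Θ) :
    ∫ x, f x ∂μ = 0 := by
  have hle := le_csSup hf (mem_image_of_mem _ hμ)
  have hle' := le_csSup hf' (mem_image_of_mem _ hμ)
  rw [integral_neg] at hle'
  unfold slExp at h h'
  linarith

theorem abs_integral_sub_quadratic_le {μ : Measure ℝ} [IsProbabilityMeasure μ] {φ ρ : ℝ → ℝ}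
    {a b c : ℝ} (hφ : Integrable φ μ) (hx : Integrable (fun x => x) μ)
    (hx2 : Integrable (fun x => x ^ 2) μ) (hρ : Integrable ρ μ) (hcent : ∫ x, x ∂μ = 0)
    (h : ∀ x, |φ x - a - b * x - 1 / 2 * c * x ^ 2| ≤ ρ x) :
    |∫ x, φ x ∂μ - a - 1 / 2 * ∫ x, c * x ^ 2 ∂μ| ≤ ∫ x, ρ x ∂μ := by
  have hlin : Integrable (fun x => a + b * x) μ := (integrable_const a).add (hx.const_mul b)
  have hquad : Integrable (fun x => 1 / 2 * c * x ^ 2) μ := hx2.const_mul (1 / 2 * c)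
  have hq : Integrable (fun x => a + b * x + 1 / 2 * c * x ^ 2) μ := hlin.add hquad
  have hpoly : ∫ x, (a + b * x + 1 / 2 * c * x ^ 2) ∂μ = a + 1 / 2 * ∫ x, c * x ^ 2 ∂μ := by
    rw [integral_add hlin hquad, integral_add (integrable_const a) (hx.const_mul b),
      integral_const_mul, hcent, integral_const_mul, integral_const_mul, integral_const]
    simp only [probReal_univ, one_smul]
    ring
  calc |∫ x, φ x ∂μ - a - 1 / 2 * ∫ x, c * x ^ 2 ∂μ|
      = |∫ x, (φ x - (a + b * x + 1 / 2 * c * x ^ 2)) ∂μ| := by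
        rw [integral_sub hφ hq, hpoly, sub_sub]
    _ ≤ ∫ x, |φ x - (a + b * x + 1 / 2 * c * x ^ 2)| ∂μ := abs_integral_le_integral_abs
    _ ≤ ∫ x, ρ x ∂μ := integral_mono (hφ.sub hq).abs hρ fun x => by
        simpa only [sub_add_eq_sub_sub] using h x

/-- two-sided sublinear Taylor bound
`|N[φ] − φ(0) − G(φ''(0))| ≤ (1/2)[φ'']_α N[|x|^{2+α}]` with `G(a) = (1/2)N[ax²]`. -/
theorem sublinear_taylor_bound (Θ : Set (Measure ℝ)) (hne : Θ.Nonempty)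
    (hprob : ∀ μ ∈ Θ, IsProbabilityMeasure μ)
    (α K : ℝ) (hα : α ∈ Set.Ioo (0:ℝ) 1) (hK : 0 ≤ K)
    (hint : ∀ μ ∈ Θ, Integrable (fun x => |x| ^ (2 + α)) μ)
    (hbdd : BddAbove ((fun μ => ∫ x, |x| ^ (2 + α) ∂μ) '' Θ))
    (hmean : slExp Θ (fun x => x) = 0) (hmean' : slExp Θ (fun x => -x) = 0)
    (φ : ℝ → ℝ) (hφb : ∃ C, ∀ x, |φ x| ≤ C)
    (hd1 : Differentiable ℝ φ) (hd2 : Differentiable ℝ (deriv φ))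
    (hH : ∀ x y : ℝ, |deriv (deriv φ) x - deriv (deriv φ) y| ≤ K * |x - y| ^ α) :
    |slExp Θ φ - φ 0 - (1/2) * slExp Θ (fun y => deriv (deriv φ) 0 * y^2)| ≤
      (1/2) * K * slExp Θ (fun x => |x| ^ (2 + α)) := by
  obtain ⟨C, hC⟩ := hφb
  have hφ : ContDiff ℝ 2 φ := contDiff_two_of_continuous_deriv_deriv hd1 hd2
    (continuous_of_abs_sub_le_mul_rpow hα.1 hH)
  have hx (x : ℝ) : |x| ≤ 1 + 1 * |x| ^ (2 + α) := by
    simpa using abs_le_one_add_abs_rpow (by linarith [hα.1]) x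
  have hx2 (x : ℝ) : |x ^ 2| ≤ 1 + 1 * |x| ^ (2 + α) := by
    simpa using sq_le_one_add_abs_rpow (by linarith [hα.1]) x
  have hφC (x : ℝ) : |φ x| ≤ C + 0 * |x| ^ (2 + α) := by simpa using hC x
  have hcent (μ) (hμ : μ ∈ Θ) : ∫ x, x ∂μ = 0 :=
    integral_eq_zero_of_slExp_eq_zero
      (bddAbove_integral_image_of_abs_le hprob hint hbdd zero_le_one measurable_id hx)
      (bddAbove_integral_image_of_abs_le hprob hint hbdd zero_le_one measurable_neg
        fun x => by simpa using hx x)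
      hmean hmean' hμ
  refine abs_csSup_image_sub_le hne
    (bddAbove_integral_image_of_abs_le hprob hint hbdd le_rfl hφ.continuous.measurable hφC)
    (bddAbove_integral_image_of_abs_le hprob hint hbdd (abs_nonneg (deriv (deriv φ) 0))
      (by fun_prop) fun x => by simpa [abs_mul, mul_add] using
        mul_le_mul_of_nonneg_left (hx2 x) (abs_nonneg (deriv (deriv φ) 0)))
    hbdd one_half_pos (by positivity) fun μ hμ => ?_
  have := hprob μ hμ
  have hint_of_le {f : ℝ → ℝ} {C D : ℝ} (hf : Continuous f)
      (h : ∀ x, |f x| ≤ C + D * |x| ^ (2 + α)) : Integrable f μ :=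
    integrable_of_abs_le_const_add_mul (hint μ hμ) hf.aestronglyMeasurable h
  refine (abs_integral_sub_quadratic_le (b := deriv φ 0) (hint_of_le hφ.continuous hφC)
    (hint_of_le continuous_id hx) (hint_of_le (continuous_pow 2) hx2) ((hint μ hμ).const_mul _)
    (hcent μ hμ) fun x => ?_).trans_eq (integral_const_mul _ _)
  simpa only [sub_zero] using abs_taylor_two_remainder_le hφ hK hα.1.le hH 0 x
end
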